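/- Let k ≥ 2, and suppose N = M^k where M ≡ 0 (mod q) for every prime q with (q−1) | k and M − 1 is not prime. Then N cannot be written as N = p^k + η with p prime, p^k < N, and Ω(η) < d(k). -/

import Mathlib

/-!
The homogenized cyclotomic values `p ^ φ(d) * Φ_d(M / p)`, `d ∣ k`, multiply to
`η = M ^ k - p ^ k`, and each is at least `(M - p) ^ φ(d)`. As `M - 1` is not prime, `p ≤ M - 2`,
so each of these `d(k)` factors is at least `2` and contributes a prime factor to `η`.
-/

open Polynomial Finset ArithmeticFunction
open scoped ArithmeticFunction.Omega

/-- `b ^ φ(n) * Φₙ(a / b)`, written without division. -/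
noncomputable def cyclotomicForm {R : Type*} [CommRing R] (n : ℕ) (a b : R) : R :=
  MvPolynomial.eval ![a, b] ((cyclotomic n R).homogenize n.totient)

theorem pow_sub_pow_eq_prod_cyclotomicForm {R : Type*} [CommRing R] {n : ℕ} (hn : 0 < n)
    (a b : R) : a ^ n - b ^ n = ∏ d ∈ n.divisors, cyclotomicForm d a b := by
  have h : ((X : R[X]) ^ n - 1).homogenize (∑ d ∈ n.divisors, d.totient) =
      ∏ d ∈ n.divisors, (cyclotomic d R).homogenize d.totient := by
    rw [← prod_cyclotomic_eq_X_pow_sub_one hn R]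
    exact homogenize_finsetProd fun d _ ↦ natDegree_cyclotomic_le
  rw [Nat.sum_totient, homogenize_sub, homogenize_X_pow le_rfl, homogenize_one] at h
  simp only [cyclotomicForm, ← map_prod, ← h]
  simp

theorem sub_pow_totient_le_cyclotomicForm {a b : ℝ} (hb : 0 < b) (hab : b < a) (n : ℕ) :
    (a - b) ^ n.totient ≤ cyclotomicForm n a b := by
  rw [cyclotomicForm, eval_homogenize natDegree_cyclotomic_le _ (by simpa using hb.ne')]
  simp only [Matrix.cons_val_zero, Matrix.cons_val_one]
  calc (a - b) ^ n.totient = (a / b - 1) ^ n.totient * b ^ n.totient := by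
        rw [← mul_pow, div_sub_one hb.ne', div_mul_cancel₀ _ hb.ne']
    _ ≤ eval (a / b) (cyclotomic n ℝ) * b ^ n.totient := by
      gcongr
      exact sub_one_pow_totient_le_cyclotomic_eval ((one_lt_div hb).2 hab) n

theorem cast_cyclotomicForm (n : ℕ) (a b : ℤ) :
    ((cyclotomicForm n a b : ℤ) : ℝ) = cyclotomicForm n (a : ℝ) b := by
  have hcomp : ![(a : ℝ), b] = Int.castRingHom ℝ ∘ ![a, b] := by
    ext i; fin_cases i <;> rfl
  rw [cyclotomicForm, cyclotomicForm, ← map_cyclotomic_int n ℝ, homogenize_map,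
    MvPolynomial.eval_map, hcomp, ← MvPolynomial.eval₂_comp]
  rfl

theorem two_le_cyclotomicForm {a b : ℤ} (hb : 0 < b) (hab : b + 2 ≤ a) {n : ℕ} (hn : 0 < n) :
    2 ≤ cyclotomicForm n a b := by
  have hab' : (2 : ℝ) ≤ a - b := by
    rw [le_sub_iff_add_le']; exact_mod_cast hab
  suffices (2 : ℝ) ≤ cyclotomicForm n a b by exact_mod_cast this
  calc (2 : ℝ) ≤ (a - b) ^ n.totient :=
        hab'.trans (le_self_pow₀ (by linarith) (Nat.totient_pos.2 hn).ne')
    _ ≤ ((cyclotomicForm n a b : ℤ) : ℝ) := by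
      rw [cast_cyclotomicForm]
      exact sub_pow_totient_le_cyclotomicForm (by exact_mod_cast hb) (by linarith) n

theorem card_le_cardFactors_prod {ι : Type*} {s : Finset ι} {f : ι → ℕ}
    (hf : ∀ i ∈ s, 1 < f i) : #s ≤ Ω (∏ i ∈ s, f i) := by
  induction s using Finset.cons_induction with
  | empty => simp
  | cons i s hi ih =>
    rw [forall_mem_cons] at hf
    rw [prod_cons, card_cons, cardFactors_mul (by omega)
      (prod_ne_zero_iff.2 fun j hj ↦ Nat.ne_zero_of_lt (hf.2 j hj))]
    have := cardFactors_pos_iff_one_lt.2 hf.1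
    have := ih hf.2
    omega

theorem card_divisors_le_cardFactors_pow_sub_pow {a b n : ℕ} (hb : 0 < b) (hab : b + 2 ≤ a) :
    #n.divisors ≤ Ω (a ^ n - b ^ n) := by
  rcases n.eq_zero_or_pos with rfl | hn
  · simp
  have hform : ∀ d ∈ n.divisors, 2 ≤ cyclotomicForm d (a : ℤ) b := fun d hd ↦
    two_le_cyclotomicForm (by exact_mod_cast hb) (by exact_mod_cast hab)
      (Nat.pos_of_mem_divisors hd)
  have hprod : a ^ n - b ^ n = ∏ d ∈ n.divisors, (cyclotomicForm d (a : ℤ) b).toNat := by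
    zify [Nat.pow_le_pow_left (by omega : b ≤ a) n]
    rw [pow_sub_pow_eq_prod_cyclotomicForm hn]
    exact prod_congr rfl fun d hd ↦ (Int.toNat_of_nonneg (by linarith [hform d hd])).symm
  rw [hprod]
  exact card_le_cardFactors_prod fun d hd ↦ by have := hform d hd; omega

theorem stmt_19_general (k M : ℕ) (hM1 : ¬ Nat.Prime (M - 1)) :
    ¬ ∃ p η : ℕ, p.Prime ∧ p ^ k < M ^ k ∧ M ^ k = p ^ k + η ∧
      η.primeFactorsList.length < k.divisors.card := by
  rintro ⟨p, η, hp, hlt, hη, hΩ⟩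
  have hpM : p < M := lt_of_pow_lt_pow_left₀ k (Nat.zero_le M) hlt
  have hpM1 : p ≠ M - 1 := fun h ↦ hM1 (h ▸ hp)
  have := card_divisors_le_cardFactors_pow_sub_pow (n := k) hp.pos (by omega : p + 2 ≤ M)
  rw [hη, Nat.add_sub_cancel_left, cardFactors_apply] at this
  omega

theorem stmt_19 (k M : ℕ) (hk : 2 ≤ k) (hMpos : 0 < M)
    (hM : ∀ q : ℕ, q.Prime → (q - 1) ∣ k → q ∣ M) (hM1 : ¬ Nat.Prime (M - 1)) :
    ¬ ∃ p η : ℕ, p.Prime ∧ p ^ k < M ^ k ∧ M ^ k = p ^ k + η ∧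
      η.primeFactorsList.length < k.divisors.card :=
  stmt_19_general k M hM1
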